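/- The function u(x,t) = max(0, -t) satisfies u_xx - u_t = 1_{u>0} almost everywhere in R^2 (indeed for all t ≠ 0), u ≥ 0 everywhere, but its time derivative u_t is discontinuous at every point (x,0). -/

import Mathlib

open Filter Topology

/- u is locally the constant 0 on {t > 0} and locally -t on {t < 0}, so there
u_t is 0, resp. -1, and u_xx = 0; the one-sided limits -1 and 0 of u_t at t = 0 differ. -/

lemma not_continuousAt_of_eventuallyEq_nhdsLT_nhdsGT {X : Type*} [TopologicalSpace X]
    [T2Space X] {g : ℝ → X} {a : ℝ} {c d : X}
    (hlt : g =ᶠ[𝓝[<] a] fun _ => c) (hgt : g =ᶠ[𝓝[>] a] fun _ => d) (hcd : c ≠ d) :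
    ¬ ContinuousAt g a := by
  intro hg
  have hc : g a = c :=
    tendsto_nhds_unique_of_eventuallyEq (hg.tendsto.mono_left nhdsWithin_le_nhds)
      tendsto_const_nhds hlt
  have hd : g a = d :=
    tendsto_nhds_unique_of_eventuallyEq (hg.tendsto.mono_left nhdsWithin_le_nhds)
      tendsto_const_nhds hgt
  exact hcd (hc.symm.trans hd)

lemma hasDerivAt_max_zero_neg_of_neg {t : ℝ} (ht : t < 0) :
    HasDerivAt (fun s : ℝ => max 0 (-s)) (-1) t := by
  refine (hasDerivAt_neg t).congr_of_eventuallyEq ?_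
  filter_upwards [Iio_mem_nhds ht] with s hs
  exact max_eq_right (neg_nonneg.mpr (le_of_lt hs))

lemma hasDerivAt_max_zero_neg_of_pos {t : ℝ} (ht : 0 < t) :
    HasDerivAt (fun s : ℝ => max 0 (-s)) 0 t := by
  refine (hasDerivAt_const t (0 : ℝ)).congr_of_eventuallyEq ?_
  filter_upwards [Ioi_mem_nhds ht] with s hs
  exact max_eq_left (neg_nonpos.mpr (le_of_lt hs))

lemma zero_lt_max_zero_neg_iff {t : ℝ} : 0 < max 0 (-t) ↔ t < 0 := by
  simp

lemma not_continuousAt_deriv_max_zero_neg :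
    ¬ ContinuousAt (deriv fun s : ℝ => max 0 (-s)) 0 :=
  not_continuousAt_of_eventuallyEq_nhdsLT_nhdsGT (c := -1) (d := 0)
    (eventually_nhdsWithin_of_forall fun _ hs => (hasDerivAt_max_zero_neg_of_neg hs).deriv)
    (eventually_nhdsWithin_of_forall fun _ hs => (hasDerivAt_max_zero_neg_of_pos hs).deriv)
    (by norm_num)

theorem stmt0 :
    (∀ t : ℝ, (0:ℝ) ≤ max 0 (-t)) ∧
    (∀ x t : ℝ, t ≠ 0 →
      deriv (deriv (fun _ : ℝ => max 0 (-t))) x - deriv (fun s : ℝ => max 0 (-s)) t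
        = Set.indicator {p : ℝ × ℝ | 0 < max 0 (-p.2)} (fun _ => (1:ℝ)) (x, t)) ∧
    (∀ x : ℝ, ¬ ContinuousAt (fun p : ℝ × ℝ => deriv (fun s : ℝ => max 0 (-s)) p.2) (x, 0)) := by
  refine ⟨fun t => le_max_left _ _, fun x t ht => ?_, fun x hcont => ?_⟩
  · rw [deriv_const', deriv_const, zero_sub]
    rcases ht.lt_or_gt with hneg | hpos
    · simp only [(hasDerivAt_max_zero_neg_of_neg hneg).deriv, Set.indicator_apply,
        Set.mem_ofPred_eq, zero_lt_max_zero_neg_iff, hneg, if_true, neg_neg]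
    · simp only [(hasDerivAt_max_zero_neg_of_pos hpos).deriv, Set.indicator_apply,
        Set.mem_ofPred_eq, zero_lt_max_zero_neg_iff, hpos.not_gt, if_false, neg_zero]
  · exact not_continuousAt_deriv_max_zero_neg <|
      hcont.comp (continuous_const.prodMk continuous_id).continuousAt
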